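/- arXiv:1104.1555 — 2 statements merged into one kernel-verified Lean document; each statement's English description precedes it below -/
import Mathlib

section
/- For n = 0,1,2,…, let ℱ_n be an increasing sequence of σ-fields and X_n random variables, measurable with respect to ℱ_n, that are identically distributed with E(|X_0| log⁺|X_0|) < ∞. Let g_n be quantizing functions with |g_n(X_n) − X_n| ≤ 1 for all n, let 𝒢_n ⊆ ℱ_n be an increasing sequence of sub-σ-fields such that Y_n = g_n(X_n) is 𝒢_n-measurable, and set Z_n = Y_n − E(Y_n | 𝒢_{n−1}). Then (1/n) Σ_{i=1}^{n} Z_i → 0 almost surely as n → ∞. -/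
/-!
Write `Y_n = g_n(X_n)`, so that `|Y_n| ≤ V_n := |X_n| + 1` with the `V_n` identically distributed,
and split it into its truncation `Y'_n` at level `n` and the tail `Y_n - Y'_n`.

The centred truncations `(Y'_n - E(Y'_n | 𝒢_{n-1})) / n` are orthogonal martingale differences
whose second moments sum to at most `∑ E min(V_0, n)² / n² ≤ 4 E V_0`, so their partial sums
converge a.s. by the martingale convergence theorem. The centred tails satisfy
`∑ E|·| / n ≤ 2 ∑ E[V_0; V_0 ≥ n] / n ≤ 2 E[V_0 (1 + log⁺ V_0)]`, which is finite by the
`L log L` hypothesis, so `∑ |·| / n` converges a.s. In both cases Kronecker's lemma turns the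
convergence of `∑ Z_i / i` into `(1/n) ∑_{i ≤ n} Z_i → 0`.
-/

open MeasureTheory Filter Finset ProbabilityTheory Real
open scoped ENNReal Topology

theorem sum_Icc_one_eq_mul_sub_sum_range (a : ℕ → ℝ) (n : ℕ) :
    ∑ i ∈ Icc 1 n, a i =
      n * ∑ i ∈ Icc 1 n, a i / i - ∑ k ∈ range n, ∑ i ∈ Icc 1 k, a i / i := by
  induction n with
  | zero => simp
  | succ n ih =>
    rw [sum_Icc_succ_top (by omega), sum_Icc_succ_top (by omega), ih, sum_range_succ]
    field_simp
    push_cast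
    ring

theorem tendsto_avg_zero_of_tendsto_sum_div {a : ℕ → ℝ} {l : ℝ}
    (h : Tendsto (fun n ↦ ∑ i ∈ Icc 1 n, a i / i) atTop (𝓝 l)) :
    Tendsto (fun n : ℕ ↦ (1 / (n : ℝ)) * ∑ i ∈ Icc 1 n, a i) atTop (𝓝 0) := by
  have hlim := h.sub h.cesaro
  rw [sub_self] at hlim
  refine hlim.congr' ?_
  filter_upwards [eventually_ne_atTop 0] with n hn
  rw [sum_Icc_one_eq_mul_sub_sum_range a n, mul_sub, one_div, ← mul_assoc,
    inv_mul_cancel₀ (Nat.cast_ne_zero.2 hn), one_mul]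

theorem tendsto_avg_zero_of_summable_div {a : ℕ → ℝ} (h : Summable fun i : ℕ ↦ a i / i) :
    Tendsto (fun n : ℕ ↦ (1 / (n : ℝ)) * ∑ i ∈ Icc 1 n, a i) atTop (𝓝 0) := by
  refine tendsto_avg_zero_of_tendsto_sum_div
    (((tendsto_add_atTop_iff_nat 1).2 h.hasSum.tendsto_sum_nat).congr fun n ↦ ?_)
  -- the `i = 0` term is `a 0 / 0 = 0`
  rw [range_eq_Ico, sum_eq_sum_Ico_succ_bot (by omega), Ico_add_one_right_eq_Icc]
  simp

theorem le_exp_one_add_mul_posLog {t : ℝ} (ht : 0 ≤ t) : t ≤ exp 1 + t * log⁺ t := by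
  rcases le_or_gt t (exp 1) with h | h
  · nlinarith [mul_nonneg ht (posLog_nonneg (x := t))]
  · have hlog : 1 ≤ log⁺ t :=
      le_max_of_le_right ((le_log_iff_exp_le ((exp_pos 1).trans h)).2 h.le)
    nlinarith [exp_pos 1]

theorem add_one_mul_posLog_add_one_le {t : ℝ} (ht : 0 ≤ t) :
    (t + 1) * log⁺ (t + 1) ≤ t * log⁺ t + 2 * t + 1 := by
  have hlog_add : log⁺ (t + 1) ≤ 1 + log⁺ t := by
    have hadd := posLog_add (x := t) (y := 1)
    have hlog_two := log_le_sub_one_of_pos (zero_lt_two' ℝ)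
    rw [posLog_one, add_zero] at hadd
    linarith
  have hle_self : log⁺ t ≤ t := max_le ht (log_le_self ht)
  nlinarith [mul_le_mul_of_nonneg_left hlog_add (by linarith : 0 ≤ t + 1)]

theorem sum_range_ite_div_le_mul_one_add_posLog (v : ℝ) (hv : 0 ≤ v) (N : ℕ) :
    ∑ n ∈ range N, (if (n : ℝ) ≤ v then v else 0) / n ≤ v * (1 + log⁺ v) := by
  have hharmonic : (harmonic ⌊v⌋₊ : ℝ) ≤ 1 + log⁺ v := by
    rcases lt_or_ge v 1 with h | h
    · simp [Nat.floor_eq_zero.2 h, posLog_nonneg, add_nonneg]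
    · exact (harmonic_floor_le_one_add_log v h).trans (by gcongr; exact le_max_right _ _)
  calc ∑ n ∈ range N, (if (n : ℝ) ≤ v then v else 0) / n
      = v * ∑ n ∈ (range N).filter (fun n : ℕ ↦ (n : ℝ) ≤ v), (n : ℝ)⁻¹ := by
        rw [sum_filter, mul_sum]
        exact sum_congr rfl fun n _ ↦ by split_ifs <;> simp [div_eq_mul_inv]
    _ ≤ v * ∑ n ∈ range (⌊v⌋₊ + 1), (n : ℝ)⁻¹ := by
        gcongr
        intro n hn
        simp only [mem_filter, mem_range] at hn ⊢
        exact Nat.lt_succ_of_le (Nat.le_floor hn.2)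
    _ = v * harmonic ⌊v⌋₊ := by
        simp [harmonic, sum_range_succ']
    _ ≤ v * (1 + log⁺ v) := by gcongr

theorem sum_range_min_sq_div_sq_le (v : ℝ) (hv : 0 ≤ v) (N : ℕ) :
    ∑ n ∈ range N, min v n ^ 2 / n ^ 2 ≤ 4 * v := by
  rcases hv.eq_or_lt with rfl | hv
  · simp
  -- `min v m / m ≤ 2 v / (m + v)`, and `1 / (m + v) ^ 2` telescopes against `1 / (m - 1 + v)`
  have hterm (n : ℕ) :
      min v (n + 1) ^ 2 / (n + 1) ^ 2 ≤ 4 * v ^ 2 * (1 / (n + v) - 1 / (n + 1 + v)) := by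
    have hmin : min v (n + 1) / (n + 1) ≤ 2 * v / (n + 1 + v) := by
      rw [div_le_div_iff₀ (by positivity) (by positivity)]
      rcases min_cases v ((n : ℝ) + 1) with ⟨h, h'⟩ | ⟨h, h'⟩ <;> rw [h] <;> nlinarith
    calc min v (n + 1) ^ 2 / (n + 1) ^ 2 ≤ (2 * v / (n + 1 + v)) ^ 2 := by
          rw [← div_pow]; gcongr
      _ = 4 * v ^ 2 / (n + 1 + v) ^ 2 := by rw [div_pow]; ring
      _ ≤ 4 * v ^ 2 / ((n + v) * (n + 1 + v)) :=
          div_le_div_of_nonneg_left (by positivity) (by positivity) (by nlinarith)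
      _ = 4 * v ^ 2 * (1 / (n + v) - 1 / (n + 1 + v)) := by field_simp; ring
  calc ∑ n ∈ range N, min v n ^ 2 / n ^ 2 ≤ ∑ n ∈ range (N + 1), min v n ^ 2 / n ^ 2 :=
        sum_le_sum_of_subset_of_nonneg (range_subset_range.2 N.le_succ)
          fun _ _ _ ↦ by positivity
    _ = ∑ n ∈ range N, min v (n + 1 : ℕ) ^ 2 / (n + 1 : ℕ) ^ 2 := by simp [sum_range_succ']
    _ ≤ ∑ n ∈ range N, 4 * v ^ 2 * (1 / (n + v) - 1 / (n + 1 + v)) :=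
        sum_le_sum fun n _ ↦ by exact_mod_cast hterm n
    _ = 4 * v ^ 2 * (1 / v - 1 / (N + v)) := by
        have htelescope := sum_range_sub' (fun n : ℕ ↦ 1 / ((n : ℝ) + v)) N
        push_cast at htelescope
        rw [← mul_sum, htelescope, zero_add]
    _ ≤ 4 * v := by
        have hpos : 0 ≤ 1 / (N + v) := by positivity
        rw [mul_sub, show 4 * v ^ 2 * (1 / v) = 4 * v by field_simp]
        nlinarith

section

variable {Ω : Type*} {m0 : MeasurableSpace Ω} {μ : Measure Ω}

theorem integral_mul_eq_zero_of_condExp_eq_zero {m : MeasurableSpace Ω} (hm : m ≤ m0)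
    [SigmaFinite (μ.trim hm)] {f g : Ω → ℝ} (hf : StronglyMeasurable[m] f)
    (hfg : Integrable (f * g) μ) (hg : Integrable g μ) (hcond : μ[g | m] =ᵐ[μ] 0) :
    ∫ ω, f ω * g ω ∂μ = 0 := by
  change ∫ ω, (f * g) ω ∂μ = 0
  rw [← integral_condExp hm]
  refine integral_eq_zero_of_ae ?_
  filter_upwards [condExp_mul_of_stronglyMeasurable_left hf hfg hg, hcond] with ω hfg hg
  simp [hfg, hg]

theorem condExp_sub_condExp_ae_eq_zero {m : MeasurableSpace Ω} (hm : m ≤ m0)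
    [SigmaFinite (μ.trim hm)] {f : Ω → ℝ} (hf : Integrable f μ) :
    μ[f - μ[f | m] | m] =ᵐ[μ] 0 := by
  have hidem : μ[μ[f | m] | m] = μ[f | m] :=
    condExp_of_stronglyMeasurable hm stronglyMeasurable_condExp integrable_condExp
  filter_upwards [condExp_sub hf (integrable_condExp (m := m) (f := f)) m] with ω hω
  simp [hω, hidem]

theorem integral_sq_sub_condExp_le [IsFiniteMeasure μ] {m : MeasurableSpace Ω} (hm : m ≤ m0)
    {f : Ω → ℝ} (hf : MemLp f 2 μ) :
    ∫ ω, (f ω - μ[f | m] ω) ^ 2 ∂μ ≤ ∫ ω, f ω ^ 2 ∂μ :=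
  calc ∫ ω, (f ω - μ[f | m] ω) ^ 2 ∂μ = ∫ ω, Var[f; μ | m] ω ∂μ := (integral_condExp hm).symm
    _ ≤ ∫ ω, μ[f ^ 2 | m] ω ∂μ :=
      integral_mono_ae integrable_condVar integrable_condExp (condVar_ae_le_condExp_sq hm hf)
    _ = ∫ ω, f ω ^ 2 ∂μ := integral_condExp hm

theorem ae_summable_of_summable_integral_abs {f : ℕ → Ω → ℝ} (hf : ∀ n, Integrable (f n) μ)
    (hsum : Summable fun n ↦ ∫ ω, |f n ω| ∂μ) : ∀ᵐ ω ∂μ, Summable fun n ↦ f n ω := by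
  have hfin : ∑' n, eLpNorm (f n) 1 μ ≠ ∞ := by
    simp_rw [eLpNorm_one_eq_lintegral_enorm, ← ofReal_integral_norm_eq_lintegral_enorm (hf _),
      Real.norm_eq_abs, ← ENNReal.ofReal_tsum_of_nonneg (fun n ↦ integral_nonneg fun ω ↦
      abs_nonneg _) hsum]
    exact ENNReal.ofReal_ne_top
  filter_upwards [summable_norm_of_tsum_eLpNorm_ne_top le_rfl
    (fun n ↦ (hf n).aestronglyMeasurable) hfin] with ω hω
  exact hω.of_norm

theorem eLpNorm_one_le_of_integral_sq_le [IsFiniteMeasure μ] {f : Ω → ℝ} (hf : MemLp f 2 μ)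
    {C : ℝ} (hC : ∫ ω, f ω ^ 2 ∂μ ≤ C) :
    eLpNorm f 1 μ ≤ ENNReal.ofReal ((μ.real Set.univ + C) / 2) := by
  have hint : Integrable f μ := hf.integrable one_le_two
  rw [eLpNorm_one_eq_lintegral_enorm, ← ofReal_integral_norm_eq_lintegral_enorm hint]
  refine ENNReal.ofReal_le_ofReal ?_
  calc ∫ ω, ‖f ω‖ ∂μ ≤ ∫ ω, (1 + f ω ^ 2) / 2 ∂μ :=
        integral_mono hint.norm (((integrable_const 1).add hf.integrable_sq).div_const 2)
          fun ω ↦ by nlinarith [sq_nonneg (|f ω| - 1), sq_abs (f ω), Real.norm_eq_abs (f ω)]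
    _ = (μ.real Set.univ + ∫ ω, f ω ^ 2 ∂μ) / 2 := by
        rw [integral_div, integral_add (integrable_const 1) hf.integrable_sq]
        simp
    _ ≤ (μ.real Set.univ + C) / 2 := by linarith

section SquareIntegrableMartingale

variable [IsFiniteMeasure μ] {ℱ : Filtration ℕ m0} {d : ℕ → Ω → ℝ}

theorem stronglyAdapted_sum_Icc_one (hd : StronglyAdapted ℱ d) :
    StronglyAdapted ℱ fun n ↦ ∑ i ∈ Icc 1 n, d i := fun _ ↦
  Finset.stronglyMeasurable_sum _ fun i hi ↦ (hd i).mono (ℱ.mono (mem_Icc.1 hi).2)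

theorem martingale_sum_Icc_one (hd : StronglyAdapted ℱ d) (hint : ∀ n, Integrable (d n) μ)
    (hcond : ∀ n, μ[d (n + 1) | ℱ n] =ᵐ[μ] 0) :
    Martingale (fun n ↦ ∑ i ∈ Icc 1 n, d i) ℱ μ := by
  have hint_sum (n : ℕ) : Integrable (∑ i ∈ Icc 1 n, d i) μ :=
    integrable_finsetSum' _ fun i _ ↦ hint i
  refine martingale_nat (stronglyAdapted_sum_Icc_one hd) hint_sum fun n ↦ ?_
  rw [sum_Icc_succ_top (Nat.le_add_left 1 n)]
  filter_upwards [condExp_add (m := ℱ n) (hint_sum n) (hint (n + 1)), hcond n] with ω hadd hzero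
  simp [hadd, hzero,
    condExp_of_stronglyMeasurable (ℱ.le n) (stronglyAdapted_sum_Icc_one hd n) (hint_sum n)]

theorem integral_sq_sum_Icc_one (hd : StronglyAdapted ℱ d) (hL2 : ∀ n, MemLp (d n) 2 μ)
    (hcond : ∀ n, μ[d (n + 1) | ℱ n] =ᵐ[μ] 0) (n : ℕ) :
    ∫ ω, (∑ i ∈ Icc 1 n, d i ω) ^ 2 ∂μ = ∑ i ∈ Icc 1 n, ∫ ω, d i ω ^ 2 ∂μ := by
  induction n with
  | zero => simp
  | succ n ih =>
    set S := ∑ i ∈ Icc 1 n, d i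
    have hS : MemLp S 2 μ := memLp_finsetSum' _ fun i _ ↦ hL2 i
    have hSd : Integrable (fun ω ↦ S ω * d (n + 1) ω) μ := hS.integrable_mul (hL2 (n + 1))
    have horth : ∫ ω, S ω * d (n + 1) ω ∂μ = 0 :=
      integral_mul_eq_zero_of_condExp_eq_zero (ℱ.le n) (stronglyAdapted_sum_Icc_one hd n) hSd
        ((hL2 (n + 1)).integrable one_le_two) (hcond n)
    have hexpand (ω : Ω) : (∑ i ∈ Icc 1 (n + 1), d i ω) ^ 2 =
        S ω ^ 2 + 2 * (S ω * d (n + 1) ω) + d (n + 1) ω ^ 2 := by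
      rw [sum_Icc_succ_top (Nat.le_add_left 1 n), ← Finset.sum_apply]
      ring
    have hint_left : Integrable (fun ω ↦ S ω ^ 2 + 2 * (S ω * d (n + 1) ω)) μ :=
      hS.integrable_sq.add (hSd.const_mul 2)
    simp_rw [hexpand]
    rw [integral_add hint_left (hL2 (n + 1)).integrable_sq,
      integral_add hS.integrable_sq (hSd.const_mul 2), integral_const_mul, horth,
      sum_Icc_succ_top (Nat.le_add_left 1 n), ← ih]
    simp [S, Finset.sum_apply]

theorem ae_exists_tendsto_sum_Icc_one (hd : StronglyAdapted ℱ d) (hL2 : ∀ n, MemLp (d n) 2 μ)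
    (hcond : ∀ n, μ[d (n + 1) | ℱ n] =ᵐ[μ] 0) {C : ℝ}
    (hC : ∀ n, ∑ i ∈ Icc 1 n, ∫ ω, d i ω ^ 2 ∂μ ≤ C) :
    ∀ᵐ ω ∂μ, ∃ c, Tendsto (fun n ↦ ∑ i ∈ Icc 1 n, d i ω) atTop (𝓝 c) := by
  have hbdd (n : ℕ) : eLpNorm (∑ i ∈ Icc 1 n, d i) 1 μ ≤
      ((μ.real Set.univ + C) / 2).toNNReal := by
    refine eLpNorm_one_le_of_integral_sq_le (memLp_finsetSum' _ fun i _ ↦ hL2 i) ?_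
    simpa [Finset.sum_apply, integral_sq_sum_Icc_one hd hL2 hcond n] using hC n
  filter_upwards [(martingale_sum_Icc_one hd (fun n ↦ (hL2 n).integrable one_le_two)
    hcond).submartingale.exists_ae_tendsto_of_bdd hbdd] with ω ⟨c, hc⟩
  exact ⟨c, by simpa [Finset.sum_apply] using hc⟩

end SquareIntegrableMartingale

theorem ae_tendsto_avg_sub_condExp_of_summable_integral_abs (m : ℕ → MeasurableSpace Ω)
    {T : ℕ → Ω → ℝ} (hT : ∀ n, Integrable (T n) μ)
    (hsum : Summable fun n : ℕ ↦ ∫ ω, |T n ω| / n ∂μ) :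
    ∀ᵐ ω ∂μ, Tendsto (fun n : ℕ ↦ (1 / (n : ℝ)) * ∑ i ∈ Icc 1 n, (T i ω - μ[T i | m i] ω))
      atTop (𝓝 0) := by
  have hint (n : ℕ) : Integrable (fun ω ↦ (T n ω - μ[T n | m n] ω) / n) μ :=
    ((hT n).sub integrable_condExp).div_const _
  have hle (n : ℕ) : ∫ ω, |(T n ω - μ[T n | m n] ω) / n| ∂μ ≤ 2 * ∫ ω, |T n ω| / n ∂μ := by
    have htri : ∫ ω, |T n ω - μ[T n | m n] ω| ∂μ ≤
        ∫ ω, |T n ω| ∂μ + ∫ ω, |μ[T n | m n] ω| ∂μ := by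
      rw [← integral_add (hT n).abs integrable_condExp.abs]
      exact integral_mono ((hT n).sub integrable_condExp).abs
        ((hT n).abs.add integrable_condExp.abs) fun ω ↦ abs_sub _ _
    simp_rw [abs_div, Nat.abs_cast, integral_div]
    rw [← mul_div_assoc]
    gcongr
    linarith [integral_abs_condExp_le (μ := μ) (m := m n) (T n)]
  have hsum' : Summable fun n ↦ ∫ ω, |(T n ω - μ[T n | m n] ω) / n| ∂μ :=
    (hsum.mul_left 2).of_nonneg_of_le (fun n ↦ integral_nonneg fun ω ↦ abs_nonneg _) hle
  filter_upwards [ae_summable_of_summable_integral_abs hint hsum'] with ω hω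
  exact tendsto_avg_zero_of_summable_div hω

theorem ae_tendsto_avg_sub_condExp_of_summable_integral_sq [IsFiniteMeasure μ]
    (𝒢 : Filtration ℕ m0) {Y : ℕ → Ω → ℝ} (hY : StronglyAdapted 𝒢 Y)
    (hL2 : ∀ n, MemLp (Y n) 2 μ) (hsum : Summable fun n : ℕ ↦ ∫ ω, Y n ω ^ 2 / n ^ 2 ∂μ) :
    ∀ᵐ ω ∂μ, Tendsto
      (fun n : ℕ ↦ (1 / (n : ℝ)) * ∑ i ∈ Icc 1 n, (Y i ω - μ[Y i | 𝒢 (i - 1)] ω)) atTop (𝓝 0) := by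
  set d : ℕ → Ω → ℝ := fun i ω ↦ (Y i ω - μ[Y i | 𝒢 (i - 1)] ω) / i
  have hd : StronglyAdapted 𝒢 d := fun i ↦
    ((hY i).sub (stronglyMeasurable_condExp.mono (𝒢.mono (Nat.sub_le i 1)))).mul_const _
  have hdL2 (i : ℕ) : MemLp (d i) 2 μ :=
    ((hL2 i).sub ((hL2 i).condExp one_le_two)).mul_const _
  have hcond (n : ℕ) : μ[d (n + 1) | 𝒢 n] =ᵐ[μ] 0 := by
    have hsmul : d (n + 1) = ((n + 1 : ℕ) : ℝ)⁻¹ • (Y (n + 1) - μ[Y (n + 1) | 𝒢 n]) := by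
      ext ω
      simp [d, div_eq_inv_mul]
    rw [hsmul]
    filter_upwards
      [condExp_smul (μ := μ) ((n + 1 : ℕ) : ℝ)⁻¹ (Y (n + 1) - μ[Y (n + 1) | 𝒢 n]) (𝒢 n),
      condExp_sub_condExp_ae_eq_zero (𝒢.le n) ((hL2 (n + 1)).integrable one_le_two)]
      with ω hscalar hzero
    rw [hscalar, Pi.smul_apply, hzero, Pi.zero_apply, smul_zero]
  have hd_sq (i : ℕ) : ∫ ω, d i ω ^ 2 ∂μ ≤ ∫ ω, Y i ω ^ 2 / i ^ 2 ∂μ := by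
    simp_rw [d, div_pow, integral_div]
    exact div_le_div_of_nonneg_right (integral_sq_sub_condExp_le (𝒢.le _) (hL2 i))
      (by positivity)
  have hC (n : ℕ) : ∑ i ∈ Icc 1 n, ∫ ω, d i ω ^ 2 ∂μ ≤ ∑' i : ℕ, ∫ ω, Y i ω ^ 2 / i ^ 2 ∂μ :=
    (sum_le_sum fun i _ ↦ hd_sq i).trans
      (hsum.sum_le_tsum _ fun i _ ↦ integral_nonneg fun ω ↦ by positivity)
  filter_upwards [ae_exists_tendsto_sum_Icc_one hd hdL2 hcond hC] with ω ⟨c, hc⟩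
  exact tendsto_avg_zero_of_tendsto_sum_div hc

theorem integrable_of_integrable_abs_mul_posLog [IsFiniteMeasure μ] {f : Ω → ℝ}
    (hf : AEStronglyMeasurable f μ) (h : Integrable (fun ω ↦ |f ω| * log⁺ |f ω|) μ) :
    Integrable f μ :=
  ((integrable_const (exp 1)).add h).mono' hf
    (ae_of_all _ fun ω ↦ le_exp_one_add_mul_posLog (abs_nonneg (f ω)))

theorem integrable_abs_add_one_mul_posLog [IsFiniteMeasure μ] {f : Ω → ℝ} (hf : Integrable f μ)
    (h : Integrable (fun ω ↦ |f ω| * log⁺ |f ω|) μ) :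
    Integrable (fun ω ↦ (|f ω| + 1) * log⁺ (|f ω| + 1)) μ := by
  refine ((h.add (hf.abs.const_mul 2)).add (integrable_const 1)).mono' ?_ (ae_of_all _ fun ω ↦ ?_)
  · have hfm := hf.aestronglyMeasurable
    fun_prop
  · rw [Real.norm_of_nonneg (mul_nonneg (by positivity) posLog_nonneg)]
    exact add_one_mul_posLog_add_one_le (abs_nonneg (f ω))

theorem summable_integral_of_le_comp_identDistrib {V : ℕ → Ω → ℝ}
    (hV : ∀ n, IdentDistrib (V n) (V 0) μ μ) {f : ℕ → Ω → ℝ} (hf0 : ∀ n ω, 0 ≤ f n ω)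
    {φ : ℕ → ℝ → ℝ} (hφ : ∀ n, Measurable (φ n)) (hfφ : ∀ n ω, f n ω ≤ φ n (V n ω))
    (hφ0 : ∀ n ω, 0 ≤ φ n (V 0 ω)) {B : ℝ → ℝ} (hB : Integrable (fun ω ↦ B (V 0 ω)) μ)
    (hφB : ∀ N ω, ∑ n ∈ range N, φ n (V 0 ω) ≤ B (V 0 ω)) :
    Summable fun n ↦ ∫ ω, f n ω ∂μ := by
  have hφint (n : ℕ) : Integrable (fun ω ↦ φ n (V 0 ω)) μ := by
    refine hB.mono' ((hφ n).comp_aemeasurable (hV 0).aemeasurable_snd).aestronglyMeasurable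
      (ae_of_all _ fun ω ↦ ?_)
    rw [Real.norm_of_nonneg (hφ0 n ω)]
    exact (single_le_sum (fun i _ ↦ hφ0 i ω) (self_mem_range_succ n)).trans (hφB (n + 1) ω)
  have hφV (n : ℕ) : IdentDistrib (fun ω ↦ φ n (V n ω)) (fun ω ↦ φ n (V 0 ω)) μ μ :=
    (hV n).comp (hφ n)
  have hle (n : ℕ) : ∫ ω, f n ω ∂μ ≤ ∫ ω, φ n (V 0 ω) ∂μ := by
    rw [← (hφV n).integral_eq]
    exact integral_mono_of_nonneg (ae_of_all _ (hf0 n)) ((hφV n).integrable_iff.2 (hφint n))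
      (ae_of_all _ (hfφ n))
  refine summable_of_sum_range_le (c := ∫ ω, B (V 0 ω) ∂μ) (fun n ↦ integral_nonneg (hf0 n))
    fun N ↦ ?_
  calc ∑ n ∈ range N, ∫ ω, f n ω ∂μ ≤ ∑ n ∈ range N, ∫ ω, φ n (V 0 ω) ∂μ :=
        sum_le_sum fun n _ ↦ hle n
    _ = ∫ ω, ∑ n ∈ range N, φ n (V 0 ω) ∂μ := (integral_finsetSum _ fun n _ ↦ hφint n).symm
    _ ≤ ∫ ω, B (V 0 ω) ∂μ :=
        integral_mono (integrable_finsetSum _ fun n _ ↦ hφint n) hB (hφB N)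

theorem abs_sub_truncation_le {α : Type*} (f : α → ℝ) (A : ℝ) (x : α) :
    |f x - truncation f A x| ≤ if A ≤ |f x| then |f x| else 0 := by
  by_cases h : f x ∈ Set.Ioc (-A) A
  · simp only [truncation, Function.comp_apply, Set.indicator_of_mem h, id, sub_self, abs_zero]
    split_ifs <;> simp
  · simp only [truncation, Function.comp_apply, Set.indicator_of_notMem h, sub_zero]
    rw [if_pos]
    simp only [Set.mem_Ioc, not_and_or, not_lt, not_le] at h
    rcases h with h | h
    · exact le_abs.2 (Or.inr (by linarith))
    · exact le_abs.2 (Or.inl h.le)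

theorem summable_integral_sq_truncation_div_sq {Y V : ℕ → Ω → ℝ}
    (hV : ∀ n, IdentDistrib (V n) (V 0) μ μ) (hVint : Integrable (V 0) μ)
    (hYV : ∀ n ω, |Y n ω| ≤ V n ω) :
    Summable fun n : ℕ ↦ ∫ ω, truncation (Y n) n ω ^ 2 / n ^ 2 ∂μ := by
  refine summable_integral_of_le_comp_identDistrib hV (fun n ω ↦ by positivity)
    (φ := fun n v ↦ min v n ^ 2 / n ^ 2) (fun n ↦ by fun_prop) (fun n ω ↦ ?_)
    (fun n ω ↦ by positivity) (B := fun v ↦ 4 * v) (hVint.const_mul 4)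
    (fun N ω ↦ sum_range_min_sq_div_sq_le _ ((abs_nonneg _).trans (hYV 0 ω)) N)
  have hmin : |truncation (Y n) n ω| ≤ min (V n ω) n :=
    le_min ((abs_truncation_le_abs_self _ _ _).trans (hYV n ω))
      ((abs_truncation_le_bound _ _ _).trans_eq (Nat.abs_cast n))
  rw [← sq_abs]
  gcongr

theorem summable_integral_abs_sub_truncation_div {Y V : ℕ → Ω → ℝ}
    (hV : ∀ n, IdentDistrib (V n) (V 0) μ μ) (hVint : Integrable (V 0) μ)
    (hVlog : Integrable (fun ω ↦ V 0 ω * log⁺ (V 0 ω)) μ) (hYV : ∀ n ω, |Y n ω| ≤ V n ω) :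
    Summable fun n : ℕ ↦ ∫ ω, |Y n ω - truncation (Y n) n ω| / n ∂μ := by
  have hV0 (n : ℕ) (ω : Ω) : 0 ≤ V n ω := (abs_nonneg _).trans (hYV n ω)
  refine summable_integral_of_le_comp_identDistrib hV (fun n ω ↦ by positivity)
    (φ := fun n v ↦ (if (n : ℝ) ≤ v then v else 0) / n)
    (fun n ↦ (Measurable.ite (measurableSet_le measurable_const measurable_id) measurable_id
      measurable_const).div_const _) (fun n ω ↦ ?_)
    (fun n ω ↦ div_nonneg (by split_ifs <;> linarith [hV0 0 ω]) n.cast_nonneg)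
    (B := fun v ↦ v * (1 + log⁺ v)) ((hVint.add hVlog).congr (ae_of_all _ fun ω ↦ ?_))
    (fun N ω ↦ sum_range_ite_div_le_mul_one_add_posLog _ (hV0 0 ω) N)
  · refine div_le_div_of_nonneg_right ((abs_sub_truncation_le _ _ _).trans ?_) n.cast_nonneg
    split_ifs <;> linarith [hYV n ω, abs_nonneg (Y n ω)]
  · simp only [Pi.add_apply]
    ring

theorem ae_tendsto_avg_sub_condExp_of_abs_le_identDistrib [IsFiniteMeasure μ]
    (𝒢 : Filtration ℕ m0) {Y V : ℕ → Ω → ℝ} (hY : StronglyAdapted 𝒢 Y)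
    (hV : ∀ n, IdentDistrib (V n) (V 0) μ μ) (hVint : Integrable (V 0) μ)
    (hVlog : Integrable (fun ω ↦ V 0 ω * log⁺ (V 0 ω)) μ) (hYV : ∀ n ω, |Y n ω| ≤ V n ω) :
    ∀ᵐ ω ∂μ, Tendsto
      (fun n : ℕ ↦ (1 / (n : ℝ)) * ∑ i ∈ Icc 1 n, (Y i ω - μ[Y i | 𝒢 (i - 1)] ω)) atTop (𝓝 0) := by
  set Y' : ℕ → Ω → ℝ := fun n ↦ truncation (Y n) n
  have hY' : StronglyAdapted 𝒢 Y' := fun n ↦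
    ((measurable_id.indicator measurableSet_Ioc).comp (hY n).measurable).stronglyMeasurable
  have hY'L2 (n : ℕ) : MemLp (Y' n) 2 μ :=
    MemLp.of_bound ((hY' n).mono (𝒢.le n)).aestronglyMeasurable n
      (ae_of_all _ fun ω ↦ (abs_truncation_le_bound _ _ _).trans_eq (Nat.abs_cast n))
  have hYint (n : ℕ) : Integrable (Y n) μ :=
    ((hV n).integrable_iff.2 hVint).mono' ((hY n).mono (𝒢.le n)).aestronglyMeasurable
      (ae_of_all _ (hYV n))
  have hsplit : ∀ᵐ ω ∂μ, ∀ i, μ[Y i | 𝒢 (i - 1)] ω =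
      μ[Y' i | 𝒢 (i - 1)] ω + μ[Y i - Y' i | 𝒢 (i - 1)] ω := by
    refine ae_all_iff.2 fun i ↦ ?_
    filter_upwards [condExp_add ((hY'L2 i).integrable one_le_two)
      ((hYint i).sub ((hY'L2 i).integrable one_le_two)) (𝒢 (i - 1))] with ω hω
    rw [← Pi.add_apply, ← hω, add_sub_cancel]
  filter_upwards [hsplit,
    ae_tendsto_avg_sub_condExp_of_summable_integral_sq 𝒢 hY' hY'L2
      (summable_integral_sq_truncation_div_sq hV hVint hYV),
    ae_tendsto_avg_sub_condExp_of_summable_integral_abs (fun i ↦ 𝒢 (i - 1))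
      (fun n ↦ (hYint n).sub ((hY'L2 n).integrable one_le_two))
      (summable_integral_abs_sub_truncation_div hV hVint hVlog hYV)] with ω hω hbdd htail
  rw [← add_zero 0]
  refine (hbdd.add htail).congr fun n ↦ ?_
  rw [← mul_add, ← sum_add_distrib]
  refine congrArg _ (sum_congr rfl fun i _ ↦ ?_)
  rw [hω i, Pi.sub_apply]
  ring

end

theorem avg_tendsto_zero_of_quantized_martingale_differences_general
    {Ω : Type*} [m0 : MeasurableSpace Ω] (μ : Measure Ω) [IsProbabilityMeasure μ]
    (F : ℕ → MeasurableSpace Ω) (hFle : ∀ n, F n ≤ m0)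
    (X : ℕ → Ω → ℝ) (hXmeas : ∀ n, Measurable[F n] (X n))
    (hid : ∀ n, μ.map (X n) = μ.map (X 0))
    (hLlogL : Integrable (fun ω => |X 0 ω| * max (Real.log |X 0 ω|) 0) μ)
    (G : ℕ → MeasurableSpace Ω) (hGmono : Monotone G) (hGF : ∀ n, G n ≤ F n)
    (g : ℕ → ℝ → ℝ) (hquant : ∀ n ω, |g n (X n ω) - X n ω| ≤ 1)
    (hYmeas : ∀ n, Measurable[G n] fun ω => g n (X n ω))
    (Z : ℕ → Ω → ℝ)
    (hZ : ∀ n, 1 ≤ n →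
      Z n = fun ω => g n (X n ω) - condExp (G (n - 1)) μ (fun ω' => g n (X n ω')) ω) :
    ∀ᵐ ω ∂μ, Tendsto (fun n : ℕ => (1 / (n : ℝ)) * ∑ i ∈ Finset.Icc 1 n, Z i ω)
      atTop (nhds 0) := by
  have hXm (n : ℕ) : Measurable (X n) := (hXmeas n).mono (hFle n) le_rfl
  let 𝒢 : Filtration ℕ m0 := ⟨G, hGmono, fun n ↦ (hGF n).trans (hFle n)⟩
  have hLlogL' : Integrable (fun ω ↦ |X 0 ω| * log⁺ |X 0 ω|) μ := by
    simpa only [posLog_apply, max_comm] using hLlogL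
  have hXint : Integrable (X 0) μ :=
    integrable_of_integrable_abs_mul_posLog (hXm 0).aestronglyMeasurable hLlogL'
  have hV (n : ℕ) : IdentDistrib (fun ω ↦ |X n ω| + 1) (fun ω ↦ |X 0 ω| + 1) μ μ :=
    (IdentDistrib.mk (hXm n).aemeasurable (hXm 0).aemeasurable (hid n)).comp
      (measurable_abs.add_const 1)
  have hYV (n : ℕ) (ω : Ω) : |g n (X n ω)| ≤ |X n ω| + 1 := by
    have := abs_sub_abs_le_abs_sub (g n (X n ω)) (X n ω)
    linarith [hquant n ω]
  filter_upwards [ae_tendsto_avg_sub_condExp_of_abs_le_identDistrib 𝒢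
    (fun n ↦ (hYmeas n).stronglyMeasurable) hV (hXint.abs.add (integrable_const 1))
    (integrable_abs_add_one_mul_posLog hXint hLlogL') hYV] with ω hω
  refine hω.congr fun n ↦ ?_
  refine congrArg _ (sum_congr rfl fun i hi ↦ ?_)
  rw [hZ i (mem_Icc.1 hi).1]

/-- **Morvai–Weiss, Proposition 1, (6)** (a generalization of a result of Elton): for
identically distributed `X_n ∈ L log⁺ L` adapted to `ℱ_n`, quantized versions
`Y_n = g_n(X_n)` (with `|Y_n − X_n| ≤ 1`) measurable with respect to sub-σ-fields
`𝒢_n ⊆ ℱ_n`, the martingale differences `Z_n = Y_n − E(Y_n | 𝒢_{n-1})` satisfy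
`(1/n) ∑_{i=1}^n Z_i → 0` almost surely. -/
theorem avg_tendsto_zero_of_quantized_martingale_differences
    {Ω : Type*} [m0 : MeasurableSpace Ω] (μ : Measure Ω) [IsProbabilityMeasure μ]
    (F : ℕ → MeasurableSpace Ω) (hFmono : Monotone F) (hFle : ∀ n, F n ≤ m0)
    (X : ℕ → Ω → ℝ) (hXmeas : ∀ n, Measurable[F n] (X n))
    (hid : ∀ n, μ.map (X n) = μ.map (X 0))
    (hLlogL : Integrable (fun ω => |X 0 ω| * max (Real.log |X 0 ω|) 0) μ)
    (G : ℕ → MeasurableSpace Ω) (hGmono : Monotone G) (hGF : ∀ n, G n ≤ F n)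
    (g : ℕ → ℝ → ℝ) (hquant : ∀ n ω, |g n (X n ω) - X n ω| ≤ 1)
    (hYmeas : ∀ n, Measurable[G n] fun ω => g n (X n ω))
    (Z : ℕ → Ω → ℝ)
    (hZ : ∀ n, 1 ≤ n →
      Z n = fun ω => g n (X n ω) - condExp (G (n - 1)) μ (fun ω' => g n (X n ω')) ω) :
    ∀ᵐ ω ∂μ, Tendsto (fun n : ℕ => (1 / (n : ℝ)) * ∑ i ∈ Finset.Icc 1 n, Z i ω)
      atTop (nhds 0) :=
  avg_tendsto_zero_of_quantized_martingale_differences_general (m0 := m0) μ F hFle X hXmeas hid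
    hLlogL G hGmono hGF g hquant hYmeas Z hZ
end

section
/- Let {X_n}_{n≥1} be identically distributed real random variables with E(|X_1| log⁺|X_1|) < ∞. Then Σ_{n=1}^{∞} (1/n) E( (1 + |X_n|) · 1{|X_n| > n − 1} ) < ∞. -/
/-!
Splitting according to the size of `y = |X_n|`, the weights `1/(n+1)` attached to the terms with
`n < y` add up to the harmonic number `H_⌈y⌉ ≤ 2 + log⁺ y`. Since the `X_n` are identically
distributed, each term only depends on the law of `X_1`, so exchanging sum and expectation bounds
the series by `E[(1 + |X_1|)(2 + log⁺ |X_1|)]`, which is finite because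
`(1 + y)(2 + log⁺ y) ≤ 2 + 3e + 4 y log⁺ y`.
-/

open MeasureTheory Finset ProbabilityTheory Real
open scoped ENNReal

lemma log_add_one_le_one_add_posLog (y : ℝ) : log (y + 1) ≤ 1 + log⁺ y := by
  have hlog2 : log 2 ≤ 1 := by linarith [log_two_lt_d9]
  calc log (y + 1) ≤ log⁺ (y + 1) := le_max_right _ _
    _ ≤ log 2 + log⁺ y + log⁺ 1 := posLog_add
    _ ≤ 1 + log⁺ y := by rw [posLog_one]; linarith

lemma harmonic_natCeil_le {y : ℝ} (hy : 0 ≤ y) : (harmonic ⌈y⌉₊ : ℝ) ≤ 2 + log⁺ y := by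
  have hlog : log ⌈y⌉₊ ≤ log (y + 1) := by
    rcases Nat.eq_zero_or_pos ⌈y⌉₊ with h | h
    · rw [h, Nat.cast_zero, log_zero]
      exact log_nonneg (by linarith)
    · exact log_le_log (by exact_mod_cast h) (Nat.ceil_lt_add_one hy).le
  linarith [harmonic_le_one_add_log ⌈y⌉₊, log_add_one_le_one_add_posLog y]

lemma one_add_mul_two_add_posLog_le {y : ℝ} (hy : 0 ≤ y) :
    (1 + y) * (2 + log⁺ y) ≤ 2 + 3 * exp 1 + 4 * (y * log⁺ y) := by
  have hL0 : 0 ≤ log⁺ y := posLog_nonneg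
  have hLy : log⁺ y ≤ y := max_le hy (log_le_self hy)
  have hye : y ≤ exp 1 + y * log⁺ y := by
    rcases le_or_gt y (exp 1) with h | h
    · nlinarith
    · have h1 : 1 ≤ log⁺ y := by
        calc (1 : ℝ) = log (exp 1) := (log_exp 1).symm
          _ ≤ log⁺ y := (log_le_log (exp_pos 1) h.le).trans (le_max_right _ _)
      nlinarith [exp_pos 1]
  nlinarith

lemma tsum_one_div_succ_mul_ite_lt {y : ℝ} (hy : 0 ≤ y) :
    ∑' n : ℕ, ENNReal.ofReal (1 / ((n : ℝ) + 1)) *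
        ENNReal.ofReal (if (n : ℝ) < y then 1 + y else 0)
      = ENNReal.ofReal ((1 + y) * harmonic ⌈y⌉₊) := by
  rw [tsum_eq_sum (s := range ⌈y⌉₊) fun n hn => by
    rw [mem_range, not_lt, Nat.ceil_le] at hn
    rw [if_neg hn.not_gt, ENNReal.ofReal_zero, mul_zero]]
  rw [← sum_congr rfl fun n hn => by
      rw [if_pos (Nat.lt_ceil.mp (mem_range.mp hn)), ← ENNReal.ofReal_mul (by positivity)],
    ← ENNReal.ofReal_sum_of_nonneg fun n _ => by positivity]
  push_cast [harmonic, mul_sum]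
  simp [one_div, mul_comm]

noncomputable def tailWeight (n : ℕ) (x : ℝ) : ℝ≥0∞ :=
  ENNReal.ofReal (if (n : ℝ) < |x| then 1 + |x| else 0)

lemma measurable_tailWeight (n : ℕ) : Measurable (tailWeight n) :=
  (Measurable.ite (measurableSet_lt measurable_const measurable_abs)
    (measurable_const.add measurable_abs) measurable_const).ennreal_ofReal

lemma tsum_one_div_succ_mul_tailWeight_le (x : ℝ) :
    ∑' n : ℕ, ENNReal.ofReal (1 / ((n : ℝ) + 1)) * tailWeight n x
      ≤ ENNReal.ofReal (2 + 3 * exp 1 + 4 * (|x| * log⁺ |x|)) := by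
  unfold tailWeight
  rw [tsum_one_div_succ_mul_ite_lt (abs_nonneg x)]
  exact ENNReal.ofReal_le_ofReal <|
    (mul_le_mul_of_nonneg_left (harmonic_natCeil_le (abs_nonneg x)) (by positivity)).trans
      (one_add_mul_two_add_posLog_le (abs_nonneg x))

theorem tsum_one_div_succ_mul_lintegral_tailWeight_lt_top {Ω : Type*} [MeasurableSpace Ω]
    {μ : Measure Ω} [IsFiniteMeasure μ] {Y : Ω → ℝ} (hY : AEMeasurable Y μ)
    (hYlogY : Integrable (fun ω => |Y ω| * log⁺ |Y ω|) μ) :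
    ∑' n : ℕ, ENNReal.ofReal (1 / ((n : ℝ) + 1)) * ∫⁻ ω, tailWeight n (Y ω) ∂μ < ∞ := by
  have hmeas (n : ℕ) : AEMeasurable (fun ω => tailWeight n (Y ω)) μ :=
    (measurable_tailWeight n).comp_aemeasurable hY
  calc _ = ∫⁻ ω, ∑' n : ℕ, ENNReal.ofReal (1 / ((n : ℝ) + 1)) * tailWeight n (Y ω) ∂μ := by
        rw [lintegral_tsum fun n => (hmeas n).const_mul _]
        simp_rw [lintegral_const_mul'' _ (hmeas _)]
    _ ≤ ∫⁻ ω, ENNReal.ofReal (2 + 3 * exp 1 + 4 * (|Y ω| * log⁺ |Y ω|)) ∂μ :=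
        lintegral_mono fun ω => tsum_one_div_succ_mul_tailWeight_le (Y ω)
    _ < ∞ := ((integrable_const _).add (hYlogY.const_mul 4)).lintegral_lt_top

/-- **Elton's Lemma 2**: if `{X_n}_{n ≥ 1}` are identically distributed with
`E(|X_1| log⁺ |X_1|) < ∞`, then `∑_{n=1}^∞ (1/n) E((1 + |X_n|) · 1{|X_n| > n − 1}) < ∞`. -/
theorem sum_tail_expectations_lt_top {Ω : Type*} [MeasurableSpace Ω] (μ : Measure Ω)
    [IsProbabilityMeasure μ] (X : ℕ → Ω → ℝ)
    (hmeas : ∀ n, 1 ≤ n → Measurable (X n))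
    (hid : ∀ n, 1 ≤ n → μ.map (X n) = μ.map (X 1))
    (hLlogL : Integrable (fun ω => |X 1 ω| * max (Real.log |X 1 ω|) 0) μ) :
    ∑' n : ℕ, ENNReal.ofReal (1 / ((n : ℝ) + 1)) *
        ∫⁻ ω, ENNReal.ofReal
          (if (n : ℝ) < |X (n + 1) ω| then 1 + |X (n + 1) ω| else 0) ∂μ
      < ⊤ := by
  have hX₁ := hmeas 1 le_rfl
  have hlaw (n : ℕ) :
      ∫⁻ ω, tailWeight n (X (n + 1) ω) ∂μ = ∫⁻ ω, tailWeight n (X 1 ω) ∂μ :=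
    (IdentDistrib.comp ⟨(hmeas _ (Nat.le_add_left 1 n)).aemeasurable, hX₁.aemeasurable,
      hid _ (Nat.le_add_left 1 n)⟩ (measurable_tailWeight n)).lintegral_eq
  change ∑' n : ℕ, _ * ∫⁻ ω, tailWeight n (X (n + 1) ω) ∂μ < ⊤
  simp_rw [hlaw]
  refine tsum_one_div_succ_mul_lintegral_tailWeight_lt_top hX₁.aemeasurable ?_
  simpa only [posLog_apply, max_comm] using hLlogL
end
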